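/- Inclusion of full polynomial spaces in the grad-div element space (Lemma on 𝐏_{r−1} ⊆ W): for integers k ≥ 2 and 1 ≤ r ≤ k+1, every vector field v ∈ 𝐏_{r−1} on ℝ³ with polynomial components of total degree at most r−1 can be written as v = ∇×q + 𝔭p with q ∈ R_r and p ∈ P_{k−1}; that is, 𝐏_{r−1} ⊆ ∇×R_r + 𝔭(P_{k−1}). -/

import Mathlib

open MeasureTheory

/-- Divergence of a vector field on ℝ³. -/
noncomputable def pdiv (v : (Fin 3 → ℝ) → (Fin 3 → ℝ)) (x : Fin 3 → ℝ) : ℝ :=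
  ∑ i : Fin 3, fderiv ℝ (fun y => v y i) x (Pi.single i 1)

/-- Curl of a vector field on ℝ³. -/
noncomputable def pcurl (v : (Fin 3 → ℝ) → (Fin 3 → ℝ)) (x : Fin 3 → ℝ) : Fin 3 → ℝ :=
  ![fderiv ℝ (fun y => v y 2) x (Pi.single 1 1) - fderiv ℝ (fun y => v y 1) x (Pi.single 2 1),
    fderiv ℝ (fun y => v y 0) x (Pi.single 2 1) - fderiv ℝ (fun y => v y 2) x (Pi.single 0 1),
    fderiv ℝ (fun y => v y 1) x (Pi.single 0 1) - fderiv ℝ (fun y => v y 0) x (Pi.single 1 1)]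

/-- Gradient of a scalar field on ℝ³. -/
noncomputable def pgrad (p : (Fin 3 → ℝ) → ℝ) (x : Fin 3 → ℝ) : Fin 3 → ℝ :=
  fun i => fderiv ℝ p x (Pi.single i 1)

/-- The Poincaré-type operator 𝔭: (𝔭u)(x) = (∫₀¹ t² u(tx) dt) x. -/
noncomputable def poin (u : (Fin 3 → ℝ) → ℝ) (x : Fin 3 → ℝ) : Fin 3 → ℝ :=
  (∫ t in (0:ℝ)..1, t ^ 2 * u (t • x)) • x

/-- `u` is a polynomial function of total degree at most `r` (P_r = {0} if r < 0). -/
def IsPolyDeg (r : ℤ) (u : (Fin 3 → ℝ) → ℝ) : Prop :=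
  ∃ p : MvPolynomial (Fin 3) ℝ, (p = 0 ∨ (p.totalDegree : ℤ) ≤ r) ∧
    ∀ x, MvPolynomial.eval x p = u x

/-- `v` is a vector field with polynomial components of total degree at most `r`. -/
def IsVecPolyDeg (r : ℤ) (v : (Fin 3 → ℝ) → (Fin 3 → ℝ)) : Prop :=
  ∀ i, IsPolyDeg r fun x => v x i

/-- `u` is a polynomial function. -/
def IsPolyFun (u : (Fin 3 → ℝ) → ℝ) : Prop :=
  ∃ p : MvPolynomial (Fin 3) ℝ, ∀ x, MvPolynomial.eval x p = u x

/-- Membership in S_k = {p ∈ (P̃_k)³ : x·p(x) = 0}. -/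
def MemS (k : ℕ) (v : (Fin 3 → ℝ) → (Fin 3 → ℝ)) : Prop :=
  (∀ i, ∃ p : MvPolynomial (Fin 3) ℝ, p.IsHomogeneous k ∧ ∀ x, MvPolynomial.eval x p = v x i) ∧
    ∀ x, ∑ i : Fin 3, x i * v x i = 0

/-- Membership in the first-family Nédélec space R_k = 𝐏_{k-1} ⊕ S_k. -/
def MemR (k : ℕ) (v : (Fin 3 → ℝ) → (Fin 3 → ℝ)) : Prop :=
  ∃ v₁ v₂, IsVecPolyDeg ((k : ℤ) - 1) v₁ ∧ MemS k v₂ ∧ v = v₁ + v₂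

/-!
Split `v` into homogeneous components; the set `∇×R_r + 𝔭(P_{k-1})` is closed under addition,
so it suffices to treat a field `V` homogeneous of degree `m ≤ r - 1`. For such `V`,
`∇×(V × x) = (x·∇)V + 2V - (∇·V) x = (m + 2) V - (∇·V) x` by Euler's identity, while
`∇·V` is homogeneous of degree `m - 1`, so that `𝔭(∇·V) = (∇·V) x / (m + 2)`. Hence
`V = ∇×((V × x)/(m + 2)) + 𝔭(∇·V)`, and `(V × x)/(m + 2)` lies in `𝐏_{r-1}` if `m + 1 < r`
and in `S_r` if `m + 1 = r`.
-/

open MvPolynomial Matrix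

namespace MvPolynomial

variable {σ : Type*}

theorem IsHomogeneous.eval_smul {R : Type*} [CommSemiring R] {φ : MvPolynomial σ R} {n : ℕ}
    (h : φ.IsHomogeneous n) (t : R) (x : σ → R) : eval (t • x) φ = t ^ n * eval x φ := by
  simp only [eval_eq, Finset.mul_sum]
  refine Finset.sum_congr rfl fun d hd => ?_
  simp only [Pi.smul_apply, smul_eq_mul, mul_pow, Finset.prod_mul_distrib,
    Finset.prod_pow_eq_pow_sum, ← h.degree_eq_sum_deg_support hd]
  ring

theorem fderiv_eval_apply_single {𝕜 : Type*} [NontriviallyNormedField 𝕜] [CompleteSpace 𝕜]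
    [Fintype σ] [DecidableEq σ] (p : MvPolynomial σ 𝕜) (x : σ → 𝕜) (i : σ) :
    fderiv 𝕜 (fun y => eval y p) x (Pi.single i 1) = eval x (pderiv i p) := by
  have hd : ∀ q : MvPolynomial σ 𝕜, DifferentiableAt 𝕜 (fun y => eval y q) x := fun q =>
    (AnalyticOnNhd.eval_mvPolynomial q x trivial).differentiableAt
  induction p using MvPolynomial.induction_on with
  | C a => simp
  | add p q hp hq =>
    simp only [eval_add]
    rw [fderiv_fun_add (hd p) (hd q)]
    simp [hp, hq]
  | mul_X p k hp =>
    simp only [eval_mul, eval_X]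
    rw [fderiv_fun_mul (hd p) (differentiableAt_apply k x), (hasFDerivAt_apply k x).fderiv]
    simp [hp, pderiv_X, Pi.single_apply, apply_ite]

theorem sum_range_homogeneousComponent {R : Type*} [CommSemiring R] {φ : MvPolynomial σ R}
    {r : ℕ} (h : φ = 0 ∨ (φ.totalDegree : ℤ) ≤ (r : ℤ) - 1) :
    ∑ m ∈ Finset.range r, homogeneousComponent m φ = φ := by
  rcases h with rfl | h
  · simp
  rw [← Finset.sum_subset (Finset.range_subset_range.2 (by omega : φ.totalDegree + 1 ≤ r)),
    sum_homogeneousComponent]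
  intro m _ hm
  exact homogeneousComponent_eq_zero _ _ (by simp only [Finset.mem_range] at hm; omega)

end MvPolynomial

section PolynomialVectorCalculus

variable {R : Type*} [CommRing R]

noncomputable def polyDiv (V : Fin 3 → MvPolynomial (Fin 3) R) : MvPolynomial (Fin 3) R :=
  ∑ i, pderiv i (V i)

noncomputable def polyCurl (V : Fin 3 → MvPolynomial (Fin 3) R) : Fin 3 → MvPolynomial (Fin 3) R :=
  ![pderiv 1 (V 2) - pderiv 2 (V 1), pderiv 2 (V 0) - pderiv 0 (V 2),
    pderiv 0 (V 1) - pderiv 1 (V 0)]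

theorem polyCurl_smul (c : R) (W : Fin 3 → MvPolynomial (Fin 3) R) :
    polyCurl (c • W) = c • polyCurl W := by
  ext1 i
  fin_cases i <;> simp [polyCurl, smul_sub]

theorem polyCurl_cross_X (W : Fin 3 → MvPolynomial (Fin 3) R) (i : Fin 3) :
    polyCurl (W ⨯₃ X) i = ∑ j, X j * pderiv j (W i) + 2 * W i - X i * polyDiv W := by
  fin_cases i <;>
  simp [polyCurl, polyDiv, cross_apply, Fin.sum_univ_three, Derivation.leibniz, pderiv_X] <;> ring

theorem polyCurl_cross_X_of_isHomogeneous {m : ℕ} {V : Fin 3 → MvPolynomial (Fin 3) R}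
    (hV : ∀ i, (V i).IsHomogeneous m) (i : Fin 3) :
    polyCurl (V ⨯₃ X) i = ((m : MvPolynomial (Fin 3) R) + 2) * V i - polyDiv V * X i := by
  rw [polyCurl_cross_X, (hV i).sum_X_mul_pderiv, nsmul_eq_mul]
  ring

theorem isHomogeneous_cross {m n : ℕ} {V W : Fin 3 → MvPolynomial (Fin 3) R}
    (hV : ∀ i, (V i).IsHomogeneous m) (hW : ∀ i, (W i).IsHomogeneous n) (i : Fin 3) :
    ((V ⨯₃ W) i).IsHomogeneous (m + n) := by
  fin_cases i <;> exact ((hV _).mul (hW _)).sub ((hV _).mul (hW _))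

theorem isHomogeneous_polyDiv {m : ℕ} {V : Fin 3 → MvPolynomial (Fin 3) R}
    (hV : ∀ i, (V i).IsHomogeneous m) : (polyDiv V).IsHomogeneous (m - 1) :=
  IsHomogeneous.sum _ _ _ fun i _ => (hV i).pderiv

theorem polyDiv_eq_zero_of_isHomogeneous_zero {V : Fin 3 → MvPolynomial (Fin 3) R}
    (hV : ∀ i, (V i).IsHomogeneous 0) : polyDiv V = 0 := by
  refine Finset.sum_eq_zero fun i _ => ?_
  rw [totalDegree_eq_zero_iff_eq_C.1 ((totalDegree_zero_iff_isHomogeneous _).2 (hV i)), pderiv_C]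

end PolynomialVectorCalculus

theorem IsPolyFun.differentiable {u : (Fin 3 → ℝ) → ℝ} (h : IsPolyFun u) :
    Differentiable ℝ u := by
  obtain ⟨p, hp⟩ := h
  rw [← funext hp]
  exact differentiableOn_univ.1 (AnalyticOnNhd.eval_mvPolynomial p).differentiableOn

theorem IsPolyDeg.isPolyFun {r : ℤ} {u : (Fin 3 → ℝ) → ℝ} (h : IsPolyDeg r u) : IsPolyFun u :=
  let ⟨p, _, hp⟩ := h
  ⟨p, hp⟩

theorem IsPolyDeg.zero (r : ℤ) : IsPolyDeg r 0 :=
  ⟨0, Or.inl rfl, fun _ => by simp⟩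

theorem IsPolyDeg.add {r : ℤ} {u w : (Fin 3 → ℝ) → ℝ} (hu : IsPolyDeg r u) (hw : IsPolyDeg r w) :
    IsPolyDeg r (u + w) := by
  obtain ⟨p, hp, hpu⟩ := hu
  obtain ⟨q, hq, hqw⟩ := hw
  refine ⟨p + q, ?_, fun x => by simp [hpu, hqw]⟩
  rcases hp with rfl | hp
  · simpa using hq
  rcases hq with rfl | hq
  · simpa using Or.inr hp
  have := totalDegree_add p q
  exact Or.inr (by omega)

theorem MemS.isPolyFun {k : ℕ} {v : (Fin 3 → ℝ) → (Fin 3 → ℝ)} (h : MemS k v) (i : Fin 3) :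
    IsPolyFun fun x => v x i :=
  let ⟨p, _, hp⟩ := h.1 i
  ⟨p, hp⟩

theorem MemS.zero (k : ℕ) : MemS k 0 :=
  ⟨fun _ => ⟨0, isHomogeneous_zero _ _ _, fun _ => by simp⟩, fun _ => by simp⟩

theorem MemS.add {k : ℕ} {v w : (Fin 3 → ℝ) → (Fin 3 → ℝ)} (hv : MemS k v) (hw : MemS k w) :
    MemS k (v + w) := by
  refine ⟨fun i => ?_, fun x => ?_⟩
  · obtain ⟨p, hp, hpv⟩ := hv.1 i
    obtain ⟨q, hq, hqw⟩ := hw.1 i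
    exact ⟨p + q, hp.add hq, fun x => by simp [hpv, hqw]⟩
  · simp only [Pi.add_apply, mul_add, Finset.sum_add_distrib, hv.2 x, hw.2 x, add_zero]

theorem MemR.zero (k : ℕ) : MemR k 0 :=
  ⟨0, 0, fun _ => IsPolyDeg.zero _, MemS.zero k, by simp⟩

theorem MemR.add {k : ℕ} {v w : (Fin 3 → ℝ) → (Fin 3 → ℝ)} (hv : MemR k v) (hw : MemR k w) :
    MemR k (v + w) := by
  obtain ⟨v₁, v₂, hv₁, hv₂, rfl⟩ := hv
  obtain ⟨w₁, w₂, hw₁, hw₂, rfl⟩ := hw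
  exact ⟨v₁ + w₁, v₂ + w₂, fun i => (hv₁ i).add (hw₁ i), hv₂.add hw₂, by abel⟩

theorem MemR.differentiable {k : ℕ} {v : (Fin 3 → ℝ) → (Fin 3 → ℝ)} (h : MemR k v) (i : Fin 3) :
    Differentiable ℝ fun x => v x i := by
  obtain ⟨v₁, v₂, hv₁, hv₂, rfl⟩ := h
  exact (hv₁ i).isPolyFun.differentiable.add (hv₂.isPolyFun i).differentiable

theorem memR_of_isHomogeneous {r n : ℕ} (hn : n ≤ r) {Q : Fin 3 → MvPolynomial (Fin 3) ℝ}
    (hQ : ∀ i, (Q i).IsHomogeneous n) (hQX : X ⬝ᵥ Q = 0) :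
    MemR r fun x i => eval x (Q i) := by
  rcases hn.lt_or_eq with hlt | rfl
  · refine ⟨_, 0, fun i => ⟨Q i, Or.inr ?_, fun _ => rfl⟩, MemS.zero r, by simp⟩
    have := (hQ i).totalDegree_le
    omega
  · refine ⟨0, _, fun _ => IsPolyDeg.zero _, ⟨fun i => ⟨Q i, hQ i, fun _ => rfl⟩, fun x => ?_⟩,
      by simp⟩
    simpa [dotProduct] using congrArg (eval x) hQX

theorem isPolyDeg_polyDiv {k m : ℕ} (hmk : m ≤ k) {V : Fin 3 → MvPolynomial (Fin 3) ℝ}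
    (hV : ∀ i, (V i).IsHomogeneous m) : IsPolyDeg ((k : ℤ) - 1) fun x => eval x (polyDiv V) := by
  cases m with
  | zero => exact ⟨_, Or.inl (polyDiv_eq_zero_of_isHomogeneous_zero hV), fun _ => rfl⟩
  | succ n =>
    have := (isHomogeneous_polyDiv hV).totalDegree_le
    exact ⟨_, Or.inr (by omega), fun _ => rfl⟩

theorem pcurl_eval (Q : Fin 3 → MvPolynomial (Fin 3) ℝ) (x : Fin 3 → ℝ) :
    pcurl (fun y i => eval y (Q i)) x = fun i => eval x (polyCurl Q i) := by
  ext i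
  fin_cases i <;> simp [pcurl, polyCurl, fderiv_eval_apply_single]

theorem pcurl_add {v w : (Fin 3 → ℝ) → (Fin 3 → ℝ)} (hv : ∀ i, Differentiable ℝ fun x => v x i)
    (hw : ∀ i, Differentiable ℝ fun x => w x i) : pcurl (v + w) = pcurl v + pcurl w := by
  have h : ∀ i x, fderiv ℝ (fun y => v y i + w y i) x =
      fderiv ℝ (fun y => v y i) x + fderiv ℝ (fun y => w y i) x := fun i x =>
    fderiv_fun_add (hv i x) (hw i x)
  ext x i
  fin_cases i <;> simp [pcurl, h] <;> ring

theorem poin_add {u w : (Fin 3 → ℝ) → ℝ} (hu : Continuous u) (hw : Continuous w) :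
    poin (u + w) = poin u + poin w := by
  ext1 x
  have hi : ∀ f : (Fin 3 → ℝ) → ℝ, Continuous f →
      IntervalIntegrable (fun t : ℝ => t ^ 2 * f (t • x)) volume 0 1 := fun f hf =>
    ((continuous_pow 2).mul (hf.comp (continuous_id.smul continuous_const))).intervalIntegrable 0 1
  simp only [poin, Pi.add_apply, mul_add, intervalIntegral.integral_add (hi u hu) (hi w hw),
    add_smul]

theorem poin_eval_of_isHomogeneous {n : ℕ} {p : MvPolynomial (Fin 3) ℝ} (hp : p.IsHomogeneous n)
    (x : Fin 3 → ℝ) : poin (fun y => eval y p) x = (eval x p / (n + 3)) • x := by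
  have h : ∀ t : ℝ, t ^ 2 * eval (t • x) p = t ^ (n + 2) * eval x p := fun t => by
    rw [hp.eval_smul]; ring
  simp only [poin, h, intervalIntegral.integral_mul_const, integral_pow]
  congr 1
  push_cast
  ring

theorem poin_eval_polyDiv {m : ℕ} {V : Fin 3 → MvPolynomial (Fin 3) ℝ}
    (hV : ∀ i, (V i).IsHomogeneous m) (x : Fin 3 → ℝ) :
    poin (fun y => eval y (polyDiv V)) x = (eval x (polyDiv V) / (m + 2)) • x := by
  cases m with
  | zero => simp [polyDiv_eq_zero_of_isHomogeneous_zero hV, poin]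
  | succ n =>
    rw [poin_eval_of_isHomogeneous (isHomogeneous_polyDiv hV)]
    congr 2
    push_cast
    ring

/-- The space `∇×R_r + 𝔭(P_{k-1})`. -/
def curlPoinSubmonoid (k r : ℕ) : AddSubmonoid ((Fin 3 → ℝ) → (Fin 3 → ℝ)) where
  carrier := {v | ∃ (q : (Fin 3 → ℝ) → (Fin 3 → ℝ)) (p : (Fin 3 → ℝ) → ℝ),
    MemR r q ∧ IsPolyDeg ((k : ℤ) - 1) p ∧ ∀ x, v x = pcurl q x + poin p x}
  zero_mem' := ⟨0, 0, MemR.zero r, IsPolyDeg.zero _, fun x => by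
    ext i
    fin_cases i <;> simp [pcurl, poin]⟩
  add_mem' := by
    rintro v w ⟨q, p, hq, hp, hv⟩ ⟨q', p', hq', hp', hw⟩
    refine ⟨q + q', p + p', hq.add hq', hp.add hp', fun x => ?_⟩
    rw [Pi.add_apply, hv x, hw x, pcurl_add hq.differentiable hq'.differentiable,
      poin_add hp.isPolyFun.differentiable.continuous hp'.isPolyFun.differentiable.continuous]
    simp only [Pi.add_apply]
    abel

theorem isHomogeneous_mem_curlPoinSubmonoid {k r m : ℕ} (hmr : m + 1 ≤ r) (hmk : m ≤ k)
    {V : Fin 3 → MvPolynomial (Fin 3) ℝ} (hV : ∀ i, (V i).IsHomogeneous m) :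
    (fun x i => eval x (V i)) ∈ curlPoinSubmonoid k r := by
  have hQ : ∀ i, ((((m : ℝ) + 2)⁻¹ • V ⨯₃ X) i).IsHomogeneous (m + 1) := fun i => by
    rw [Pi.smul_apply, smul_eq_C_mul]
    exact (isHomogeneous_cross hV (isHomogeneous_X ℝ) i).C_mul _
  have hQX : X ⬝ᵥ (((m : ℝ) + 2)⁻¹ • V ⨯₃ X) = 0 := by
    rw [dotProduct_smul, dot_cross_self, smul_zero]
  refine ⟨_, _, memR_of_isHomogeneous hmr hQ hQX, isPolyDeg_polyDiv hmk hV, fun x => ?_⟩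
  ext i
  rw [pcurl_eval, poin_eval_polyDiv hV, polyCurl_smul]
  simp only [Pi.add_apply, Pi.smul_apply, polyCurl_cross_X_of_isHomogeneous hV i, smul_eq_C_mul,
    eval_mul, eval_C, eval_sub, eval_add, map_natCast, map_ofNat, eval_X, smul_eq_mul]
  field_simp
  ring

theorem stmt_13_general (k r : ℕ) (hr2 : r ≤ k + 1)
    (v : (Fin 3 → ℝ) → (Fin 3 → ℝ)) (hv : IsVecPolyDeg ((r : ℤ) - 1) v) :
    ∃ (q : (Fin 3 → ℝ) → (Fin 3 → ℝ)) (p : (Fin 3 → ℝ) → ℝ),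
      MemR r q ∧ IsPolyDeg ((k : ℤ) - 1) p ∧ ∀ x, v x = pcurl q x + poin p x := by
  choose P hPdeg hPv using hv
  have hsum : v = ∑ m ∈ Finset.range r, fun x i => eval x (homogeneousComponent m (P i)) := by
    ext x i
    simp only [Finset.sum_apply, ← map_sum, sum_range_homogeneousComponent (hPdeg i), hPv]
  rw [hsum]
  refine sum_mem fun m hm => isHomogeneous_mem_curlPoinSubmonoid ?_ ?_ fun i =>
    homogeneousComponent_isHomogeneous m (P i)
  all_goals rw [Finset.mem_range] at hm; omega

/-- 𝐏_{r-1} ⊆ ∇×R_r + 𝔭(P_{k-1}) for k ≥ 2, 1 ≤ r ≤ k+1. -/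
theorem stmt_13 (k r : ℕ) (hk : 2 ≤ k) (hr1 : 1 ≤ r) (hr2 : r ≤ k + 1)
    (v : (Fin 3 → ℝ) → (Fin 3 → ℝ)) (hv : IsVecPolyDeg ((r : ℤ) - 1) v) :
    ∃ (q : (Fin 3 → ℝ) → (Fin 3 → ℝ)) (p : (Fin 3 → ℝ) → ℝ),
      MemR r q ∧ IsPolyDeg ((k : ℤ) - 1) p ∧ ∀ x, v x = pcurl q x + poin p x :=
  stmt_13_general k r hr2 v hv
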